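/- Let $p \ge 2$. For any nonzero $u, v \in \mathbb{R}^N$ with angle $\beta < \pi$ between them, $(|u|^{p-2}u + |v|^{p-2}v)\cdot(u+v) \ge \left||u|^{p-2}u + |v|^{p-2}v\right| |u+v| \cos(\beta/2)$. -/

import Mathlib

lemma key_ineq (a b A B t : ℝ) (ha : 0 ≤ a) (hb : 0 ≤ b) (hA : 0 ≤ A) (hB : 0 ≤ B)
    (hmono : 0 ≤ (a - b) * (A - B)) (ht1 : -1 ≤ t) (ht2 : t ≤ 1) :
    (A ^ 2 * a ^ 2 + B ^ 2 * b ^ 2 + 2 * (A * B * (a * b * t))) *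
      (a ^ 2 + b ^ 2 + 2 * (a * b * t)) * (1 + t) ≤
      2 * (A * a ^ 2 + B * b ^ 2 + (A + B) * (a * b * t)) ^ 2 := by
  have h1 : 0 ≤ (a - b) * (a * A ^ 2 - b * B ^ 2) := by
    nlinarith [mul_nonneg (mul_nonneg ha (add_nonneg hA hB)) hmono,
      mul_nonneg (sq_nonneg (a - b)) (mul_nonneg hB hB)]
  have hH : 0 ≤ (a - b) ^ 2 * (a * A - b * B) ^ 2 +
      (1 + t) * (2 * (a * b) * ((a - b) * (a * A ^ 2 - b * B ^ 2)) +
        2 * (a * b) * (A * B) * (a - b) ^ 2) +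
      4 * a ^ 2 * b ^ 2 * (A * B) * (1 + t) ^ 2 := by
    have hab : 0 ≤ a * b := mul_nonneg ha hb
    have hAB : 0 ≤ A * B := mul_nonneg hA hB
    have ht : 0 ≤ 1 + t := by linarith
    have := mul_nonneg ht (add_nonneg (mul_nonneg (mul_nonneg (by norm_num : (0:ℝ) ≤ 2) hab) h1)
      (mul_nonneg (mul_nonneg (mul_nonneg (by norm_num : (0:ℝ) ≤ 2) hab) hAB) (sq_nonneg (a - b))))
    nlinarith [mul_nonneg (sq_nonneg (a - b)) (sq_nonneg (a * A - b * B)),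
      mul_nonneg (mul_nonneg (mul_nonneg (mul_nonneg (by norm_num : (0:ℝ) ≤ 4) (sq_nonneg a)) (sq_nonneg b)) hAB) (sq_nonneg (1 + t))]
  have ht : 0 ≤ 1 - t := by linarith
  nlinarith [mul_nonneg ht hH]

theorem stmt1 {N : ℕ} (p : ℝ) (hp : 2 ≤ p) (u v : EuclideanSpace ℝ (Fin N))
    (hu : u ≠ 0) (hv : v ≠ 0) (hβ : InnerProductGeometry.angle u v < Real.pi) :
    ‖‖u‖ ^ (p - 2) • u + ‖v‖ ^ (p - 2) • v‖ * ‖u + v‖ *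
      Real.cos (InnerProductGeometry.angle u v / 2)
      ≤ (inner ℝ (‖u‖ ^ (p - 2) • u + ‖v‖ ^ (p - 2) • v) (u + v) : ℝ) := by
  set β := InnerProductGeometry.angle u v with hβdef
  set a := ‖u‖ with hadef
  set b := ‖v‖ with hbdef
  set A := a ^ (p - 2) with hAdef
  set B := b ^ (p - 2) with hBdef
  have ha : 0 < a := norm_pos_iff.mpr hu
  have hb : 0 < b := norm_pos_iff.mpr hv
  have hA : 0 < A := Real.rpow_pos_of_pos ha _
  have hB : 0 < B := Real.rpow_pos_of_pos hb _
  have hmono : 0 ≤ (a - b) * (A - B) := by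
    rcases le_total a b with h | h
    · have hAB : A ≤ B := Real.rpow_le_rpow ha.le h (by linarith)
      nlinarith
    · have hAB : B ≤ A := Real.rpow_le_rpow hb.le h (by linarith)
      nlinarith
  set t := Real.cos β with htdef
  have ht1 : -1 ≤ t := Real.neg_one_le_cos β
  have ht2 : t ≤ 1 := Real.cos_le_one β
  have hc : (inner ℝ u v : ℝ) = a * b * t := by
    have h := InnerProductGeometry.cos_angle u v
    rw [← hβdef, ← htdef] at h
    rw [h]
    field_simp
    ring
  have hw2 : ‖A • u + B • v‖ ^ 2 =
      A ^ 2 * a ^ 2 + B ^ 2 * b ^ 2 + 2 * (A * B * (a * b * t)) := by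
    rw [norm_add_sq_real, real_inner_smul_left, real_inner_smul_right, hc,
      norm_smul, norm_smul, Real.norm_eq_abs, Real.norm_eq_abs,
      abs_of_pos hA, abs_of_pos hB]
    ring
  have hs2 : ‖u + v‖ ^ 2 = a ^ 2 + b ^ 2 + 2 * (a * b * t) := by
    rw [norm_add_sq_real, hc]
    ring
  have hc' : (inner ℝ v u : ℝ) = a * b * t := by rw [real_inner_comm]; exact hc
  have hi : (inner ℝ (A • u + B • v) (u + v) : ℝ) =
      A * a ^ 2 + B * b ^ 2 + (A + B) * (a * b * t) := by
    simp only [inner_add_left, inner_add_right, real_inner_smul_left,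
      real_inner_self_eq_norm_sq, hc, hc']
    ring
  have hR : 0 ≤ (inner ℝ (A • u + B • v) (u + v) : ℝ) := by
    rw [hi]
    nlinarith [mul_nonneg hA.le (sq_nonneg (a - b)), mul_nonneg hb.le hmono,
      mul_nonneg (mul_nonneg (add_nonneg hA.le hB.le) (mul_nonneg ha.le hb.le))
        (by linarith : (0:ℝ) ≤ 1 + t)]
  have hcosnn : 0 ≤ Real.cos (β / 2) := by
    have h0 := InnerProductGeometry.angle_nonneg u v
    have h1 := InnerProductGeometry.angle_le_pi u v
    rw [← hβdef] at h0 h1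
    have hpi : 0 < Real.pi := Real.pi_pos
    refine Real.cos_nonneg_of_mem_Icc ⟨by linarith, by linarith⟩
  have hL : 0 ≤ ‖A • u + B • v‖ * ‖u + v‖ * Real.cos (β / 2) :=
    mul_nonneg (mul_nonneg (norm_nonneg _) (norm_nonneg _)) hcosnn
  have hsq : (‖A • u + B • v‖ * ‖u + v‖ * Real.cos (β / 2)) ^ 2 ≤
      (inner ℝ (A • u + B • v) (u + v) : ℝ) ^ 2 := by
    have hcs : Real.cos (β / 2) ^ 2 = 1 / 2 + t / 2 := by
      have h2 : 2 * (β / 2) = β := by ring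
      rw [htdef, Real.cos_sq, h2]
    have hexp : (‖A • u + B • v‖ * ‖u + v‖ * Real.cos (β / 2)) ^ 2 =
        (A ^ 2 * a ^ 2 + B ^ 2 * b ^ 2 + 2 * (A * B * (a * b * t))) *
          (a ^ 2 + b ^ 2 + 2 * (a * b * t)) * (1 / 2 + t / 2) := by
      rw [mul_pow, mul_pow, hcs, hw2, hs2]
    rw [hexp, hi]
    linarith [key_ineq a b A B t ha.le hb.le hA.le hB.le hmono ht1 ht2]
  calc ‖A • u + B • v‖ * ‖u + v‖ * Real.cos (β / 2)
      = Real.sqrt ((‖A • u + B • v‖ * ‖u + v‖ * Real.cos (β / 2)) ^ 2) :=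
        (Real.sqrt_sq hL).symm
    _ ≤ Real.sqrt ((inner ℝ (A • u + B • v) (u + v) : ℝ) ^ 2) := Real.sqrt_le_sqrt hsq
    _ = (inner ℝ (A • u + B • v) (u + v) : ℝ) := Real.sqrt_sq hR
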